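/- arXiv:2402.08272 — 4 statements merged into one kernel-verified Lean document; each statement's English description precedes it below -/
import Mathlib

section
/- Define f_a : ℝ → ℝ for a > 0 by f_a(x) = a - |x| if |x| < a and f_a(x) = 0 otherwise. Then f_a converges uniformly to F ≡ 0 as a → 0, each f_a is 1-Lipschitz, and -1 belongs to the set D_F(0) := {v : there exist x_n → 0, a_n → 0 with a_n > 0, f_{a_n} differentiable at x_n, and f_{a_n}'(x_n) → v}; in particular D_F(0) is strictly larger than {0} = ∂F(0). -/
open Filter Topology

/-- The tent function `f_a(x) = a - |x|` if `|x| < a`, `0` otherwise. -/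
noncomputable def tent (a x : ℝ) : ℝ := if |x| < a then a - |x| else 0

/-- The set of limits of derivatives of `tent a` along sequences `(x_n, a_n) → (0, 0)`. -/
noncomputable def DFtent : Set ℝ :=
  {v : ℝ | ∃ xs as : ℕ → ℝ, Tendsto xs atTop (𝓝 0) ∧ Tendsto as atTop (𝓝 0) ∧
    (∀ n, 0 < as n) ∧ (∀ n, DifferentiableAt ℝ (tent (as n)) (xs n)) ∧
    Tendsto (fun n => deriv (tent (as n)) (xs n)) atTop (𝓝 v)}

lemma tent_eq_max (a x : ℝ) : tent a x = max (a - |x|) 0 := by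
  unfold tent
  split_ifs with h
  · rw [max_eq_left (by linarith)]
  · rw [max_eq_right (by linarith [not_lt.mp h])]

lemma abs_tent_lt {a ε : ℝ} (ha : a < ε) (hε : 0 < ε) (x : ℝ) : |tent a x| < ε := by
  rw [tent_eq_max, abs_of_nonneg (le_max_right _ _)]
  exact max_lt (by linarith [abs_nonneg x]) hε

lemma lipschitzWith_tent (a : ℝ) : LipschitzWith 1 (tent a) := by
  refine LipschitzWith.of_dist_le_mul fun x y => ?_
  simp only [Real.dist_eq, NNReal.coe_one, one_mul, tent_eq_max]
  calc |max (a - |x|) 0 - max (a - |y|) 0| ≤ |(a - |x|) - (a - |y|)| :=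
        abs_max_sub_max_le_abs _ _ _
    _ = |(|y| - |x|)| := by ring_nf
    _ ≤ |y - x| := abs_abs_sub_abs_le_abs_sub _ _
    _ = |x - y| := abs_sub_comm _ _

lemma hasDerivAt_tent {a x : ℝ} (hx : x ∈ Set.Ioo 0 a) : HasDerivAt (tent a) (-1) x := by
  have hline : HasDerivAt (fun y => a - y) (-1) x := by
    simpa using (hasDerivAt_id x).const_sub a
  refine hline.congr_of_eventuallyEq ?_
  filter_upwards [Ioo_mem_nhds hx.1 hx.2] with y hy
  rw [tent, abs_of_pos hy.1, if_pos hy.2]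

lemma neg_one_mem_DFtent : (-1 : ℝ) ∈ DFtent := by
  set as : ℕ → ℝ := fun n => 1 / (n + 1)
  have has : Tendsto as atTop (𝓝 0) := tendsto_one_div_add_atTop_nhds_zero_nat
  have has_pos : ∀ n, 0 < as n := fun n => by positivity
  have hmid : ∀ n, as n / 2 ∈ Set.Ioo 0 (as n) := fun n =>
    ⟨half_pos (has_pos n), half_lt_self (has_pos n)⟩
  refine ⟨fun n => as n / 2, as, by simpa using has.div_const 2, has, has_pos,
    fun n => (hasDerivAt_tent (hmid n)).differentiableAt, ?_⟩
  simp only [fun n => (hasDerivAt_tent (hmid n)).deriv]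
  exact tendsto_const_nhds

theorem tent_gradient_limit :
    (∀ ε > (0 : ℝ), ∃ δ > (0 : ℝ), ∀ a : ℝ, 0 < a → a < δ → ∀ x : ℝ, |tent a x - 0| < ε) ∧
    (∀ a : ℝ, 0 < a → LipschitzWith 1 (tent a)) ∧
    (-1 : ℝ) ∈ DFtent ∧ DFtent ≠ ({0} : Set ℝ) := by
  refine ⟨fun ε hε => ⟨ε, hε, fun a _ ha x => ?_⟩, fun a _ => lipschitzWith_tent a,
    neg_one_mem_DFtent, fun h => ?_⟩
  · simpa only [sub_zero] using abs_tent_lt ha hε x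
  · have := h ▸ neg_one_mem_DFtent
    norm_num at this
end

section
/- Let f : ℝ^d × (0, ∞) → ℝ be such that for every a > 0 the function f_a := f(·, a) is C¹, and suppose that for every x ∈ ℝ^d, f(y, a) → F(x) as (y, a) → (x, 0), where F : ℝ^d → ℝ is continuous. If x* is a local minimum of F, then 0 ∈ D_F(x*), where D_F(x*) := {v ∈ ℝ^d : there exist x_n → x*, a_n → 0 with a_n > 0 and ∇f_{a_n}(x_n) → v}. -/
/-!
On a closed ball `B` around `x*` on which `x*` minimises `F`, the joint convergence
`f(y, a) → F(x)` makes `f_a → F` uniformly. Once `|F - f_a| < ρ² / 2` on `B`, a minimiser `z`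
of `f_a + ‖· - x*‖²` over `B` is no worse than `x*`, which forces `‖z - x*‖ < ρ`. So `z` is an
interior local minimiser, and `∇f_a(z) = 2 (x* - z)` has norm `< 2ρ`. Letting `ρ → 0` produces
the required sequences.
-/

open Filter Topology Metric

theorem tendstoLocallyUniformly_of_tendsto_nhds_prod {α β ι : Type*} [TopologicalSpace α]
    [UniformSpace β] {p : Filter ι} {f : ι → α → β} {F : α → β} (hF : Continuous F)
    (h : ∀ x, Tendsto (fun q : α × ι => f q.2 q.1) (𝓝 x ×ˢ p) (𝓝 (F x))) :
    TendstoLocallyUniformly f F p := by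
  rw [tendstoLocallyUniformly_iff_forall_tendsto]
  intro x
  have hf : Tendsto (fun q : ι × α => f q.1 q.2) (p ×ˢ 𝓝 x) (𝓝 (F x)) :=
    (h x).comp (tendsto_snd.prodMk tendsto_fst)
  exact (((hF.tendsto x).comp tendsto_snd).prodMk hf).mono_right
    (by rw [← nhds_prod_eq]; exact nhds_le_uniformity _)

theorem exists_isLocalMin_add_dist_sq_lt {X : Type*} [MetricSpace X] [ProperSpace X]
    {F g : X → ℝ} {x₀ : X} {r ρ : ℝ} (hg : ContinuousOn g (closedBall x₀ r))
    (hF : ∀ y ∈ closedBall x₀ r, F x₀ ≤ F y) (hρ : 0 < ρ) (hρr : ρ ≤ r)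
    (happrox : ∀ y ∈ closedBall x₀ r, dist (F y) (g y) < ρ ^ 2 / 2) :
    ∃ z, dist z x₀ < ρ ∧ IsLocalMin (fun x => g x + dist x x₀ ^ 2) z := by
  have hx₀ : x₀ ∈ closedBall x₀ r := mem_closedBall_self (hρ.le.trans hρr)
  obtain ⟨z, hz, hzmin⟩ := (isCompact_closedBall x₀ r).exists_isMinOn ⟨x₀, hx₀⟩
    (hg.add ((continuous_id.dist (continuous_const (y := x₀))).pow 2).continuousOn)
  have hle : g z + dist z x₀ ^ 2 ≤ g x₀ := by simpa using hzmin hx₀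
  have hdist : dist z x₀ < ρ := by
    refine lt_of_pow_lt_pow_left₀ 2 hρ.le ?_
    have hFz := hF z hz
    have hgz := (abs_lt.1 (happrox z hz)).2
    have hgx₀ := (abs_lt.1 (happrox x₀ hx₀)).1
    linarith
  exact ⟨z, hdist, hzmin.isLocalMin (closedBall_mem_nhds_of_mem (hdist.trans_le hρr))⟩

section InnerProductSpace

variable {E : Type*} [NormedAddCommGroup E] [InnerProductSpace ℝ E] [CompleteSpace E]

theorem gradient_eq_of_isLocalMin_add_norm_sub_sq {g : E → ℝ} {x₀ z : E}
    (hg : DifferentiableAt ℝ g z) (hmin : IsLocalMin (fun x => g x + ‖x - x₀‖ ^ 2) z) :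
    gradient g z = (2 : ℝ) • (x₀ - z) := by
  have hsq : HasFDerivAt (fun x => ‖x - x₀‖ ^ 2) (2 • innerSL ℝ (z - x₀)) z := by
    simpa using ((hasFDerivAt_id z).sub_const x₀).norm_sq
  have hzero := hmin.hasFDerivAt_eq_zero (hg.hasFDerivAt.add hsq)
  refine HasGradientAt.gradient (hasGradientAt_iff_hasFDerivAt.2 ?_)
  suffices InnerProductSpace.toDual ℝ E ((2 : ℝ) • (x₀ - z)) = fderiv ℝ g z from
    this ▸ hg.hasFDerivAt
  rw [eq_neg_of_add_eq_zero_left hzero]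
  ext y
  simp only [map_smul, map_sub, smul_apply, sub_apply, InnerProductSpace.toDual_apply_apply,
    smul_eq_mul, neg_apply, coe_innerSL_apply, nsmul_eq_mul, Nat.cast_ofNat]
  ring

/-- The set `D_F(x)`. -/
def smoothingGradientLimits (f : E → ℝ → ℝ) (x : E) : Set E :=
  {v | ∃ (xs : ℕ → E) (as : ℕ → ℝ), Tendsto xs atTop (𝓝 x) ∧ Tendsto as atTop (𝓝 0) ∧
    (∀ n, 0 < as n) ∧ Tendsto (fun n => gradient (fun x => f x (as n)) (xs n)) atTop (𝓝 v)}

theorem mem_smoothingGradientLimits_of_forall_pos {f : E → ℝ → ℝ} {x v : E}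
    (h : ∀ ε > 0, ∃ a y, 0 < a ∧ a < ε ∧ dist y x < ε ∧
      dist (gradient (fun y => f y a) y) v < ε) :
    v ∈ smoothingGradientLimits f x := by
  choose as xs has_pos has_lt hxs hgrad using
    fun n : ℕ => h (1 / ((n : ℝ) + 1)) Nat.one_div_pos_of_nat
  have hε := tendsto_one_div_add_atTop_nhds_zero_nat (𝕜 := ℝ)
  refine ⟨xs, as, ?_, ?_, has_pos, ?_⟩
  · exact tendsto_iff_dist_tendsto_zero.2
      (squeeze_zero (fun _ => dist_nonneg) (fun n => (hxs n).le) hε)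
  · exact squeeze_zero (fun n => (has_pos n).le) (fun n => (has_lt n).le) hε
  · exact tendsto_iff_dist_tendsto_zero.2
      (squeeze_zero (fun _ => dist_nonneg) (fun n => (hgrad n).le) hε)

end InnerProductSpace

theorem local_min_is_DF_critical_for_smoothing {d : ℕ}
    (f : EuclideanSpace ℝ (Fin d) → ℝ → ℝ) (F : EuclideanSpace ℝ (Fin d) → ℝ)
    (hC1 : ∀ a : ℝ, 0 < a → ContDiff ℝ 1 (fun x => f x a))
    (hF : Continuous F)
    (hconv : ∀ x : EuclideanSpace ℝ (Fin d),
      Tendsto (fun p : EuclideanSpace ℝ (Fin d) × ℝ => f p.1 p.2)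
        ((𝓝 x) ×ˢ (𝓝[>] (0 : ℝ))) (𝓝 (F x)))
    (xstar : EuclideanSpace ℝ (Fin d)) (hmin : IsLocalMin F xstar) :
    (0 : EuclideanSpace ℝ (Fin d)) ∈
      {v : EuclideanSpace ℝ (Fin d) |
        ∃ (xs : ℕ → EuclideanSpace ℝ (Fin d)) (as : ℕ → ℝ),
          Tendsto xs atTop (𝓝 xstar) ∧ Tendsto as atTop (𝓝 0) ∧ (∀ n, 0 < as n) ∧
          Tendsto (fun n => gradient (fun x => f x (as n)) (xs n)) atTop (𝓝 v)} := by
  obtain ⟨r, hr, hFr⟩ := nhds_basis_closedBall.eventually_iff.1 hmin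
  have hunif : TendstoUniformlyOn (fun a x => f x a) F (𝓝[>] 0) (closedBall xstar r) :=
    (tendstoLocallyUniformlyOn_iff_tendstoUniformlyOn_of_compact (isCompact_closedBall _ _)).1
      (tendstoLocallyUniformly_of_tendsto_nhds_prod hF hconv).tendstoLocallyUniformlyOn
  refine mem_smoothingGradientLimits_of_forall_pos fun ε hε => ?_
  obtain ⟨ρ, hρ, hρε, hρr⟩ : ∃ ρ > 0, 2 * ρ ≤ ε ∧ ρ ≤ r :=
    ⟨min ε r / 2, by positivity, by linarith [min_le_left ε r], by linarith [min_le_right ε r]⟩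
  have hclose : ∀ᶠ a in 𝓝[>] 0,
      (∀ y ∈ closedBall xstar r, dist (F y) (f y a) < ρ ^ 2 / 2) ∧ a < ε :=
    (tendstoUniformlyOn_iff.1 hunif _ (by positivity)).and
      (eventually_nhdsWithin_of_eventually_nhds (eventually_lt_nhds hε))
  obtain ⟨a, ⟨happrox, haε⟩, ha⟩ := (hclose.and self_mem_nhdsWithin).exists
  obtain ⟨z, hzx, hzmin⟩ := exists_isLocalMin_add_dist_sq_lt (hC1 a ha).continuous.continuousOn
    hFr hρ hρr happrox
  simp only [dist_eq_norm] at hzmin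
  have hgrad := gradient_eq_of_isLocalMin_add_norm_sub_sq
    ((hC1 a ha).differentiable one_ne_zero z) hzmin
  refine ⟨a, z, ha, haε, by linarith, ?_⟩
  rw [hgrad, dist_zero_right, norm_smul, Real.norm_two, ← dist_eq_norm, dist_comm]
  linarith
end

section
/- For a > 0, define f_a(t) = √(t² + 4a²) - √(t² + a²). Then f_a converges uniformly to F ≡ 0 as a → 0, each f_a is C¹, and with t_n = a_n → 0 one has f_{a_n}'(t_n) = 1/√5 - 1/√2 for all n; consequently the number 1/√5 - 1/√2 ≠ 0 lies in D_F(0) := {v : ∃ t_n → 0, a_n → 0, a_n > 0, f_{a_n}'(t_n) → v}, while ∂F(0) = {0}. -/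
open Filter Topology

/-- `f_a(t) = √(t² + 4a²) - √(t² + a²)`, a smoothing of the zero function. -/
noncomputable def twoSqrtDiff (a t : ℝ) : ℝ :=
  Real.sqrt (t ^ 2 + 4 * a ^ 2) - Real.sqrt (t ^ 2 + a ^ 2)

/-- Limits of derivatives of `twoSqrtDiff a_n` along sequences `(t_n, a_n) → (0, 0)`. -/
noncomputable def DFtwoSqrtDiff : Set ℝ :=
  {v : ℝ | ∃ ts as : ℕ → ℝ, Tendsto ts atTop (𝓝 0) ∧ Tendsto as atTop (𝓝 0) ∧
    (∀ n, 0 < as n) ∧ Tendsto (fun n => deriv (twoSqrtDiff (as n)) (ts n)) atTop (𝓝 v)}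

lemma hasDerivAt_sqrtsq (c t : ℝ) (hc : 0 < c) :
    HasDerivAt (fun t => Real.sqrt (t ^ 2 + c)) (t / Real.sqrt (t ^ 2 + c)) t := by
  have h : HasDerivAt (fun t : ℝ => t ^ 2 + c) (2 * t) t := by
    simpa using ((hasDerivAt_pow 2 t).add_const c)
  have h2 := h.sqrt (by positivity)
  convert h2 using 1
  have hs : (0:ℝ) < Real.sqrt (t ^ 2 + c) := Real.sqrt_pos.2 (by positivity)
  field_simp

lemma deriv_twoSqrtDiff (a : ℝ) (ha : 0 < a) (t : ℝ) :
    deriv (twoSqrtDiff a) t =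
      t / Real.sqrt (t ^ 2 + 4 * a ^ 2) - t / Real.sqrt (t ^ 2 + a ^ 2) := by
  have h1 := hasDerivAt_sqrtsq (4 * a ^ 2) t (by positivity)
  have h2 := hasDerivAt_sqrtsq (a ^ 2) t (by positivity)
  exact (h1.sub h2).deriv

lemma deriv_at_a (a : ℝ) (ha : 0 < a) :
    deriv (twoSqrtDiff a) a = 1 / Real.sqrt 5 - 1 / Real.sqrt 2 := by
  rw [deriv_twoSqrtDiff a ha a]
  have h5 : Real.sqrt (a ^ 2 + 4 * a ^ 2) = Real.sqrt 5 * a := by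
    rw [show a ^ 2 + 4 * a ^ 2 = 5 * a ^ 2 by ring, Real.sqrt_mul (by norm_num),
      Real.sqrt_sq ha.le]
  have h2 : Real.sqrt (a ^ 2 + a ^ 2) = Real.sqrt 2 * a := by
    rw [show a ^ 2 + a ^ 2 = 2 * a ^ 2 by ring, Real.sqrt_mul (by norm_num),
      Real.sqrt_sq ha.le]
  rw [h5, h2]
  have s5 : (0:ℝ) < Real.sqrt 5 := Real.sqrt_pos.2 (by norm_num)
  have s2 : (0:ℝ) < Real.sqrt 2 := Real.sqrt_pos.2 (by norm_num)
  have e2 : Real.sqrt 2 * Real.sqrt 2 = 2 := Real.mul_self_sqrt (by norm_num)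
  have e5 : Real.sqrt 5 * Real.sqrt 5 = 5 := Real.mul_self_sqrt (by norm_num)
  field_simp

theorem twoSqrtDiff_gradient_inconsistency :
    (∀ ε > (0 : ℝ), ∃ δ > (0 : ℝ), ∀ a : ℝ, 0 < a → a < δ → ∀ t : ℝ, |twoSqrtDiff a t| < ε) ∧
    (∀ a : ℝ, 0 < a → ContDiff ℝ 1 (twoSqrtDiff a)) ∧
    (∀ a : ℝ, 0 < a → deriv (twoSqrtDiff a) a = 1 / Real.sqrt 5 - 1 / Real.sqrt 2) ∧
    (1 / Real.sqrt 5 - 1 / Real.sqrt 2 : ℝ) ∈ DFtwoSqrtDiff ∧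
    (1 / Real.sqrt 5 - 1 / Real.sqrt 2 : ℝ) ≠ 0 := by
  have hne : (1 / Real.sqrt 5 - 1 / Real.sqrt 2 : ℝ) ≠ 0 := by
    have h25 : Real.sqrt 2 < Real.sqrt 5 := by
      apply Real.sqrt_lt_sqrt <;> norm_num
    have s2 : (0:ℝ) < Real.sqrt 2 := Real.sqrt_pos.2 (by norm_num)
    have : (1:ℝ) / Real.sqrt 5 < 1 / Real.sqrt 2 := by
      apply one_div_lt_one_div_of_lt s2 h25
    linarith
  refine ⟨?_, ?_, fun a ha => deriv_at_a a ha, ?_, hne⟩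
  · intro ε hε
    refine ⟨2 * ε / 3, by positivity, fun a ha had t => ?_⟩
    have h1 : Real.sqrt (t ^ 2 + a ^ 2) ≤ Real.sqrt (t ^ 2 + 4 * a ^ 2) := by
      apply Real.sqrt_le_sqrt; nlinarith
    have h2 : Real.sqrt (t ^ 2 + 4 * a ^ 2) ≤ Real.sqrt (t ^ 2 + a ^ 2) + 3 * a / 2 := by
      rw [← Real.sqrt_sq (by positivity : (0:ℝ) ≤ Real.sqrt (t ^ 2 + a ^ 2) + 3 * a / 2)]
      apply Real.sqrt_le_sqrt
      have hs : Real.sqrt (t ^ 2 + a ^ 2) ^ 2 = t ^ 2 + a ^ 2 :=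
        Real.sq_sqrt (by positivity)
      have ha' : a ≤ Real.sqrt (t ^ 2 + a ^ 2) := by
        have h := Real.sqrt_le_sqrt (show a ^ 2 ≤ t ^ 2 + a ^ 2 by nlinarith)
        rwa [Real.sqrt_sq ha.le] at h
      nlinarith [Real.sqrt_nonneg (t ^ 2 + a ^ 2)]
    rw [abs_lt]
    constructor <;> unfold twoSqrtDiff <;> nlinarith
  · intro a ha
    have hc : ∀ c : ℝ, 0 < c → ContDiff ℝ 1 (fun t : ℝ => Real.sqrt (t ^ 2 + c)) := by
      intro c hc
      apply ContDiff.sqrt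
      · exact (contDiff_id.pow 2).add contDiff_const
      · intro t; positivity
    exact (hc _ (by positivity)).sub (hc _ (by positivity))
  · refine ⟨fun n => 1 / (n + 1), fun n => 1 / (n + 1), tendsto_one_div_add_atTop_nhds_zero_nat,
      tendsto_one_div_add_atTop_nhds_zero_nat, fun n => by positivity, ?_⟩
    have : ∀ n : ℕ, deriv (twoSqrtDiff (1 / (n + 1))) (1 / (n + 1)) =
        1 / Real.sqrt 5 - 1 / Real.sqrt 2 := fun n => deriv_at_a _ (by positivity)
    simp only [this]
    exact tendsto_const_nhds
end

section
/- Let F(x) = sign(x)·√|x| and for a > 0 define f_a(x) = √(x + a) for x > 0 and f_a(x) = 2√a - √(a - x) for x ≤ 0. Then f is a smoothing function of F (i.e., each f_a is C¹ on ℝ and f_a(y) → F(x) as (y,a) → (x,0)), and f_a'(x) → +∞ as (x, a) → (0, 0); consequently D_F(0) := {v ∈ ℝ : ∃ x_n → 0, a_n → 0, a_n > 0, f_{a_n}'(x_n) → v} is empty. -/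
/-!
Writing `x⁺ = max x 0` and `x⁻ = max (-x) 0`, the smoothing has the closed form
`f_a(x) = √(x⁺ + a) + √a - √(a + x⁻)`, which is jointly continuous in `(x, a)` and equals
`F` at `a = 0`. On either side of `0` the derivative is `1 / (2√(a + |x|))`, continuous for
`a > 0` but unbounded as `(x, a) → (0, 0)`, so no sequence of derivatives can converge there.
-/

open Filter Topology

/-- The non Lipschitz function `F(x) = sign(x)·√|x|`. -/
noncomputable def signSqrt (x : ℝ) : ℝ := Real.sign x * Real.sqrt |x|

/-- A smoothing of `signSqrt`: `f_a(x) = √(x + a)` for `x > 0`, `2√a - √(a - x)` otherwise. -/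
noncomputable def signSqrtSmoothing (a x : ℝ) : ℝ :=
  if 0 < x then Real.sqrt (x + a) else 2 * Real.sqrt a - Real.sqrt (a - x)

open Set

lemma signSqrtSmoothing_of_nonpos {a x : ℝ} (hx : x ≤ 0) :
    signSqrtSmoothing a x = 2 * √a - √(a - x) :=
  if_neg hx.not_gt

lemma signSqrtSmoothing_of_nonneg {a x : ℝ} (hx : 0 ≤ x) :
    signSqrtSmoothing a x = √(x + a) := by
  rcases hx.eq_or_lt with rfl | hx
  · rw [signSqrtSmoothing_of_nonpos le_rfl, sub_zero, zero_add]
    ring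
  · exact if_pos hx

lemma signSqrtSmoothing_eq_max (a x : ℝ) :
    signSqrtSmoothing a x = √(max x 0 + a) + √a - √(a + max (-x) 0) := by
  rcases le_total x 0 with hx | hx
  · rw [signSqrtSmoothing_of_nonpos hx, max_eq_right hx, max_eq_left (neg_nonneg.2 hx),
      zero_add, ← sub_eq_add_neg]
    ring
  · rw [signSqrtSmoothing_of_nonneg hx, max_eq_left hx, max_eq_right (neg_nonpos.2 hx),
      add_zero]
    ring

lemma signSqrtSmoothing_zero : signSqrtSmoothing 0 = signSqrt := by
  ext x
  rcases lt_trichotomy x 0 with hx | rfl | hx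
  · simp [signSqrtSmoothing_of_nonpos hx.le, signSqrt, Real.sign_of_neg hx, abs_of_neg hx]
  · simp [signSqrtSmoothing_of_nonpos, signSqrt]
  · simp [signSqrtSmoothing_of_nonneg hx.le, signSqrt, Real.sign_of_pos hx, abs_of_pos hx]

lemma continuous_signSqrtSmoothing_uncurry :
    Continuous fun p : ℝ × ℝ => signSqrtSmoothing p.2 p.1 := by
  simp only [signSqrtSmoothing_eq_max]
  fun_prop

lemma hasDerivWithinAt_signSqrtSmoothing_Ici {a x : ℝ} (ha : 0 < a) (hx : 0 ≤ x) :
    HasDerivWithinAt (signSqrtSmoothing a) (2 * √(a + |x|))⁻¹ (Ici 0) x := by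
  have h := ((hasDerivAt_id x).add_const a).sqrt (by positivity)
  rw [abs_of_nonneg hx, add_comm a, ← one_div]
  exact h.hasDerivWithinAt.congr (fun y hy => signSqrtSmoothing_of_nonneg hy)
    (signSqrtSmoothing_of_nonneg hx)

lemma hasDerivWithinAt_signSqrtSmoothing_Iic {a x : ℝ} (ha : 0 < a) (hx : x ≤ 0) :
    HasDerivWithinAt (signSqrtSmoothing a) (2 * √(a + |x|))⁻¹ (Iic 0) x := by
  have h := (((hasDerivAt_id x).const_sub a).sqrt (sub_pos.2 (hx.trans_lt ha)).ne').const_sub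
    (2 * √a)
  have hval : -(-1 / (2 * √(a - id x))) = (2 * √(a + |x|))⁻¹ := by
    rw [abs_of_nonpos hx, id, neg_div, neg_neg, one_div, sub_eq_add_neg]
  rw [← hval]
  exact h.hasDerivWithinAt.congr (fun y hy => signSqrtSmoothing_of_nonpos hy)
    (signSqrtSmoothing_of_nonpos hx)

lemma hasDerivAt_signSqrtSmoothing {a : ℝ} (ha : 0 < a) (x : ℝ) :
    HasDerivAt (signSqrtSmoothing a) (2 * √(a + |x|))⁻¹ x := by
  rcases lt_trichotomy x 0 with hx | rfl | hx
  · exact (hasDerivWithinAt_signSqrtSmoothing_Iic ha hx.le).hasDerivAt (Iic_mem_nhds hx)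
  · simpa [Iic_union_Ici, hasDerivWithinAt_univ] using
      (hasDerivWithinAt_signSqrtSmoothing_Iic ha le_rfl).union
        (hasDerivWithinAt_signSqrtSmoothing_Ici ha le_rfl)
  · exact (hasDerivWithinAt_signSqrtSmoothing_Ici ha hx.le).hasDerivAt (Ici_mem_nhds hx)

lemma deriv_signSqrtSmoothing {a : ℝ} (ha : 0 < a) :
    deriv (signSqrtSmoothing a) = fun x => (2 * √(a + |x|))⁻¹ :=
  funext fun x => (hasDerivAt_signSqrtSmoothing ha x).deriv

theorem contDiff_one_signSqrtSmoothing {a : ℝ} (ha : 0 < a) :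
    ContDiff ℝ 1 (signSqrtSmoothing a) := by
  rw [contDiff_one_iff_deriv, deriv_signSqrtSmoothing ha]
  exact ⟨fun x => (hasDerivAt_signSqrtSmoothing ha x).differentiableAt,
    Continuous.inv₀ (by fun_prop) fun x => by positivity⟩

lemma prod_nhdsWithin_le_nhds {X Y : Type*} [TopologicalSpace X] [TopologicalSpace Y]
    (x : X) (y : Y) (s : Set Y) : 𝓝 x ×ˢ 𝓝[s] y ≤ 𝓝 (x, y) := by
  rw [nhds_prod_eq]
  exact prod_mono le_rfl nhdsWithin_le_nhds

theorem tendsto_deriv_signSqrtSmoothing_atTop :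
    Tendsto (fun p : ℝ × ℝ => deriv (signSqrtSmoothing p.2) p.1) (𝓝 0 ×ˢ 𝓝[>] 0) atTop := by
  have hpos : ∀ᶠ p : ℝ × ℝ in 𝓝 0 ×ˢ 𝓝[>] 0, 0 < p.2 :=
    Eventually.prod_inr self_mem_nhdsWithin _
  have hden : Tendsto (fun p : ℝ × ℝ => 2 * √(p.2 + |p.1|)) (𝓝 0 ×ˢ 𝓝[>] 0) (𝓝[>] 0) := by
    refine tendsto_nhdsWithin_iff.2 ⟨?_, hpos.mono fun p hp => by simp only [mem_Ioi]; positivity⟩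
    have hcont : Continuous fun p : ℝ × ℝ => 2 * √(p.2 + |p.1|) := by fun_prop
    simpa using (hcont.tendsto (0, 0)).mono_left (prod_nhdsWithin_le_nhds 0 0 _)
  refine hden.inv_tendsto_nhdsGT_zero.congr' ?_
  filter_upwards [hpos] with p hp
  rw [deriv_signSqrtSmoothing hp, Pi.inv_apply]

lemma not_tendsto_nhds_of_tendsto_atTop_prod_nhdsGT {X ι : Type*} [TopologicalSpace X]
    {l : Filter ι} [l.NeBot] {g : X × ℝ → ℝ} {x : X} {b : ℝ}
    (hg : Tendsto g (𝓝 x ×ˢ 𝓝[>] b) atTop) {xs : ι → X} {bs : ι → ℝ}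
    (hxs : Tendsto xs l (𝓝 x)) (hbs : Tendsto bs l (𝓝 b)) (hlt : ∀ i, b < bs i) (v : ℝ) :
    ¬Tendsto (fun i => g (xs i, bs i)) l (𝓝 v) :=
  not_tendsto_nhds_of_tendsto_atTop
    (hg.comp (hxs.prodMk (tendsto_nhdsWithin_iff.2 ⟨hbs, .of_forall hlt⟩))) v

theorem signSqrt_smoothing_empty_DF :
    (∀ a : ℝ, 0 < a → ContDiff ℝ 1 (signSqrtSmoothing a)) ∧
    (∀ x : ℝ, Tendsto (fun p : ℝ × ℝ => signSqrtSmoothing p.2 p.1)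
        ((𝓝 x) ×ˢ (𝓝[>] (0 : ℝ))) (𝓝 (signSqrt x))) ∧
    Tendsto (fun p : ℝ × ℝ => deriv (signSqrtSmoothing p.2) p.1)
        ((𝓝 (0 : ℝ)) ×ˢ (𝓝[>] (0 : ℝ))) atTop ∧
    {v : ℝ | ∃ xs as : ℕ → ℝ, Tendsto xs atTop (𝓝 0) ∧ Tendsto as atTop (𝓝 0) ∧
      (∀ n, 0 < as n) ∧
      Tendsto (fun n => deriv (signSqrtSmoothing (as n)) (xs n)) atTop (𝓝 v)} = ∅ := by
  refine ⟨fun a ha => contDiff_one_signSqrtSmoothing ha, fun x => ?_,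
    tendsto_deriv_signSqrtSmoothing_atTop, ?_⟩
  · rw [← signSqrtSmoothing_zero]
    exact (continuous_signSqrtSmoothing_uncurry.tendsto (x, 0)).mono_left
      (prod_nhdsWithin_le_nhds x 0 _)
  · refine eq_empty_of_forall_notMem fun v ⟨xs, as, hxs, has, hpos, hv⟩ => ?_
    exact not_tendsto_nhds_of_tendsto_atTop_prod_nhdsGT
      tendsto_deriv_signSqrtSmoothing_atTop hxs has hpos v hv
end
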